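/- arXiv:2510.11452 — 2 statements merged into one kernel-verified Lean document; each statement's English description precedes it below -/
import Mathlib

section
/- In the two-player interconnected contest with Tullock contest success function with parameter γ ∈ (0,1], equilibrium outcomes are unique in the following sense: for any two Nash equilibria, (a) the induced winning probabilities p_i^k coincide for every player i and battlefield k, (b) the total effort Σ_{k∈B} e_i^k of each player i coincides, (c) the payoff Π_i of each player i coincides, and (d) at every battlefield at which both players' effective efforts are positive in some equilibrium, the pair of effective efforts (y_1^k, y_2^k) coincides across all equilibria. -/
open Finset Matrix

/-- Effective effort of a player with spillover matrix `ρ` and effort vector `e`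
at battlefield `k`: `y^k = e^k + ∑_{l ≠ k} ρ^{l,k} e^l`. -/
noncomputable def effY {m : ℕ} (ρ : Matrix (Fin m) (Fin m) ℝ) (e : Fin m → ℝ)
    (k : Fin m) : ℝ :=
  e k + ∑ l ∈ Finset.univ.erase k, ρ l k * e l

/-- Tullock contest success function with parameter `γ`.  When both effective
efforts are `0` this gives `0/0 = 0`, matching the convention. -/
noncomputable def tullock (γ y₁ y₂ : ℝ) : ℝ :=
  y₁ ^ γ / (y₁ ^ γ + y₂ ^ γ)

noncomputable def payoff {m : ℕ} (γ : ℝ) (v : Fin m → ℝ) (c : Fin 2 → ℝ)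
    (ρ : Fin 2 → Matrix (Fin m) (Fin m) ℝ) (e : Fin 2 → Fin m → ℝ) (i : Fin 2) : ℝ :=
  (∑ k, v k * tullock γ (effY (ρ i) (e i) k) (effY (ρ (1 - i)) (e (1 - i)) k))
    - c i * ∑ k, e i k

def IsNashEq {m : ℕ} (γ : ℝ) (v : Fin m → ℝ) (c : Fin 2 → ℝ)
    (ρ : Fin 2 → Matrix (Fin m) (Fin m) ℝ) (e : Fin 2 → Fin m → ℝ) : Prop :=
  (∀ i k, 0 ≤ e i k) ∧
  ∀ (i : Fin 2) (e' : Fin m → ℝ), (∀ k, 0 ≤ e' k) →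
    payoff γ v c ρ (Function.update e i e') i ≤ payoff γ v c ρ e i

noncomputable def eqProb {m : ℕ} (γ : ℝ) (ρ : Fin 2 → Matrix (Fin m) (Fin m) ℝ)
    (e : Fin 2 → Fin m → ℝ) (i : Fin 2) (k : Fin m) : ℝ :=
  tullock γ (effY (ρ i) (e i) k) (effY (ρ (1 - i)) (e (1 - i)) k)

/-! Against fixed opponent efforts, a player's payoff is concave in her own efforts (Tullock with
`γ ≤ 1`, spillovers linear), strictly so in the effective effort at every battlefield where the
opponent is active. Up to effort costs the contest is constant-sum: the prizes won add up to `∑ v`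
minus the prizes of battlefields where nobody is active, and a deviation can moreover capture each
such battlefield at negligible cost. Given two equilibria `e` and `e'`, let each player deviate in
one of them to her strategy in the other: summing the four deviation inequalities, all payoffs and
costs cancel, so every inequality is tight and `e' i` is a best response to `e (1 - i)`. Strict
concavity then pins down the effective efforts wherever the opponent is active, and every other
battlefield is won outright by the same player in both equilibria. -/

open Filter Topology

section FieldLemmas

variable {𝕜 : Type*} [Field 𝕜] [LinearOrder 𝕜] [IsStrictOrderedRing 𝕜] {u u' B : 𝕜}

lemma div_add_le_div_add (hu : 0 ≤ u) (huu' : u ≤ u') (hB : 0 ≤ B) :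
    u / (u + B) ≤ u' / (u' + B) := by
  rcases (add_nonneg hu hB).eq_or_lt with h | h
  · rw [← h, div_zero]
    exact div_nonneg (hu.trans huu') (by linarith)
  · rw [div_le_div_iff₀ h (by linarith)]
    nlinarith

lemma div_add_add_div_add_lt (hu : 0 ≤ u) (hu' : 0 ≤ u') (hne : u ≠ u') (hB : 0 < B) :
    u / (u + B) + u' / (u' + B) < 2 * ((u + u') / 2 / ((u + u') / 2 + B)) := by
  have hsq : 0 < (u - u') ^ 2 := by positivity [sub_ne_zero.2 hne]
  rw [div_add_div _ _ (by positivity) (by positivity), mul_div_assoc', lt_div_iff₀ (by positivity),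
    div_mul_eq_mul_div, div_lt_iff₀ (by positivity)]
  nlinarith [mul_pos hB hsq]

end FieldLemmas

section Tullock

variable {γ x x' y : ℝ}

lemma tullock_zero_left (hγ : 0 < γ) (y : ℝ) : tullock γ 0 y = 0 := by
  simp [tullock, Real.zero_rpow hγ.ne']

lemma tullock_zero_right (hγ : 0 < γ) (hx : 0 < x) : tullock γ x 0 = 1 := by
  rw [tullock, Real.zero_rpow hγ.ne', add_zero, div_self (Real.rpow_pos_of_pos hx γ).ne']

lemma tullock_le_one (hx : 0 ≤ x) (hy : 0 ≤ y) : tullock γ x y ≤ 1 :=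
  div_le_one_of_le₀ (le_add_of_nonneg_right (Real.rpow_nonneg hy γ)) (by positivity)

lemma tullock_add_tullock_swap (hx : 0 ≤ x) (hy : 0 ≤ y) (h : 0 < x ∨ 0 < y) :
    tullock γ x y + tullock γ y x = 1 := by
  have hpos : 0 < x ^ γ + y ^ γ := by
    rcases h with h | h
    · exact add_pos_of_pos_of_nonneg (Real.rpow_pos_of_pos h γ) (Real.rpow_nonneg hy γ)
    · exact add_pos_of_nonneg_of_pos (Real.rpow_nonneg hx γ) (Real.rpow_pos_of_pos h γ)
  rw [tullock, tullock, add_comm (y ^ γ), ← add_div, div_self hpos.ne']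

lemma tullock_le_tullock_left (hγ : 0 < γ) (hx : 0 ≤ x) (hxx' : x ≤ x') (hy : 0 ≤ y) :
    tullock γ x y ≤ tullock γ x' y :=
  div_add_le_div_add (Real.rpow_nonneg hx γ) (Real.rpow_le_rpow hx hxx' hγ.le)
    (Real.rpow_nonneg hy γ)

lemma tullock_add_tullock_lt (hγ₀ : 0 < γ) (hγ₁ : γ ≤ 1) (hx : 0 ≤ x) (hx' : 0 ≤ x')
    (hne : x ≠ x') (hy : 0 < y) :
    tullock γ x y + tullock γ x' y < 2 * tullock γ ((x + x') / 2) y := by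
  have hrpow_ne : x ^ γ ≠ x' ^ γ := fun h => hne <| by
    rwa [Real.rpow_left_inj hx hx' hγ₀.ne'] at h
  have hrpow_mid : (x ^ γ + x' ^ γ) / 2 ≤ ((x + x') / 2) ^ γ := by
    have := (Real.concaveOn_rpow hγ₀.le hγ₁).2 (Set.mem_Ici.2 hx) (Set.mem_Ici.2 hx')
      (by norm_num : (0 : ℝ) ≤ 1 / 2) (by norm_num : (0 : ℝ) ≤ 1 / 2) (by norm_num)
    simp only [smul_eq_mul] at this
    calc (x ^ γ + x' ^ γ) / 2 = 1 / 2 * x ^ γ + 1 / 2 * x' ^ γ := by ring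
      _ ≤ (1 / 2 * x + 1 / 2 * x') ^ γ := this
      _ = ((x + x') / 2) ^ γ := by ring_nf
  calc tullock γ x y + tullock γ x' y
      < 2 * ((x ^ γ + x' ^ γ) / 2 / ((x ^ γ + x' ^ γ) / 2 + y ^ γ)) :=
        div_add_add_div_add_lt (Real.rpow_nonneg hx γ) (Real.rpow_nonneg hx' γ) hrpow_ne
          (Real.rpow_pos_of_pos hy γ)
    _ ≤ 2 * tullock γ ((x + x') / 2) y := by
        gcongr
        exact div_add_le_div_add (by positivity) hrpow_mid (Real.rpow_nonneg hy.le γ)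

lemma tullock_add_tullock_le (hγ₀ : 0 < γ) (hγ₁ : γ ≤ 1) (hx : 0 ≤ x) (hx' : 0 ≤ x')
    (hy : 0 ≤ y) : tullock γ x y + tullock γ x' y ≤ 2 * tullock γ ((x + x') / 2) y := by
  rcases hy.eq_or_lt with rfl | hy
  · rcases (show 0 ≤ (x + x') / 2 by positivity).eq_or_lt with hmid | hmid
    · obtain ⟨rfl, rfl⟩ : x = 0 ∧ x' = 0 := ⟨by linarith, by linarith⟩
      simp [tullock_zero_left hγ₀]
    · rw [tullock_zero_right hγ₀ hmid]
      linarith [tullock_le_one (γ := γ) hx le_rfl, tullock_le_one (γ := γ) hx' le_rfl]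
  · rcases eq_or_ne x x' with rfl | hne
    · rw [add_self_div_two, two_mul]
    · exact (tullock_add_tullock_lt hγ₀ hγ₁ hx hx' hne hy).le

lemma tullock_eq_of_exchange (hγ : 0 < γ) (hx : 0 ≤ x) (hy : 0 ≤ y) (h : 0 < x ∨ 0 < y)
    (h' : 0 < x' ∨ 0 < y) (hxx' : 0 < y → x' = x) (hyy' : 0 < x → y' = y) :
    tullock γ x' y = tullock γ x y ∧ tullock γ x' y' = tullock γ x y := by
  rcases hx.eq_or_lt with rfl | hx
  · have hy := h.resolve_left (lt_irrefl 0)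
    rw [hxx' hy]
    exact ⟨rfl, by rw [tullock_zero_left hγ, tullock_zero_left hγ]⟩
  · rw [hyy' hx, and_self]
    rcases hy.eq_or_lt with rfl | hy
    · rw [tullock_zero_right hγ hx, tullock_zero_right hγ (h'.resolve_right (lt_irrefl 0))]
    · rw [hxx' hy]

end Tullock

section EffectiveEffort

variable {m : ℕ} {ρ : Matrix (Fin m) (Fin m) ℝ}

lemma effY_add (ρ : Matrix (Fin m) (Fin m) ℝ) (a b : Fin m → ℝ) (k : Fin m) :
    effY ρ (a + b) k = effY ρ a k + effY ρ b k := by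
  simp only [effY, Pi.add_apply, mul_add, sum_add_distrib]
  ring

lemma effY_smul (ρ : Matrix (Fin m) (Fin m) ℝ) (t : ℝ) (a : Fin m → ℝ) (k : Fin m) :
    effY ρ (t • a) k = t * effY ρ a k := by
  simp only [effY, Pi.smul_apply, smul_eq_mul, mul_add, mul_sum]
  congr 1
  exact sum_congr rfl fun l _ => by ring

lemma le_effY (hρ : ∀ k l, 0 ≤ ρ k l) {a : Fin m → ℝ} (ha : ∀ l, 0 ≤ a l) (k : Fin m) :
    a k ≤ effY ρ a k :=
  le_add_of_nonneg_right (sum_nonneg fun l _ => mul_nonneg (hρ l k) (ha l))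

lemma effY_nonneg (hρ : ∀ k l, 0 ≤ ρ k l) {a : Fin m → ℝ} (ha : ∀ l, 0 ≤ a l) (k : Fin m) :
    0 ≤ effY ρ a k :=
  (ha k).trans (le_effY hρ ha k)

end EffectiveEffort

section BestResponse

variable {m : ℕ} {γ c : ℝ} {v : Fin m → ℝ} {ρ : Matrix (Fin m) (Fin m) ℝ} {y a a' : Fin m → ℝ}

noncomputable def payoffAgainst (γ : ℝ) (v : Fin m → ℝ) (c : ℝ) (ρ : Matrix (Fin m) (Fin m) ℝ)
    (y a : Fin m → ℝ) : ℝ :=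
  (∑ k, v k * tullock γ (effY ρ a k) (y k)) - c * ∑ k, a k

def IsBestResponse (γ : ℝ) (v : Fin m → ℝ) (c : ℝ) (ρ : Matrix (Fin m) (Fin m) ℝ)
    (y a : Fin m → ℝ) : Prop :=
  (∀ l, 0 ≤ a l) ∧ ∀ z : Fin m → ℝ, (∀ l, 0 ≤ z l) →
    payoffAgainst γ v c ρ y z ≤ payoffAgainst γ v c ρ y a

/-- An extra effort `δ` at each battlefield of `K` wins its whole prize; then let `δ → 0`. -/
lemma IsBestResponse.payoffAgainst_add_sum_le (hb : IsBestResponse γ v c ρ y a) (hγ : 0 < γ)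
    (hv : ∀ k, 0 ≤ v k) (hρ : ∀ k l, 0 ≤ ρ k l) (hy : ∀ k, 0 ≤ y k) (ha' : ∀ l, 0 ≤ a' l)
    {K : Finset (Fin m)} (hK : ∀ k ∈ K, effY ρ a' k = 0 ∧ y k = 0) :
    payoffAgainst γ v c ρ y a' + ∑ k ∈ K, v k ≤ payoffAgainst γ v c ρ y a := by
  have hbump : ∀ δ > 0,
      payoffAgainst γ v c ρ y a' + ∑ k ∈ K, v k - c * (#K * δ) ≤ payoffAgainst γ v c ρ y a := by
    intro δ hδ
    set d : Fin m → ℝ := fun l => if l ∈ K then δ else 0 with hd_def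
    have hd : ∀ l, 0 ≤ d l := fun l => by simp only [hd_def]; split_ifs <;> linarith
    refine le_trans ?_ (hb.2 (a' + d) fun l => add_nonneg (ha' l) (hd l))
    have hprize : ∀ l, v l * tullock γ (effY ρ a' l) (y l) + (if l ∈ K then v l else 0)
        ≤ v l * tullock γ (effY ρ (a' + d) l) (y l) := by
      intro l
      rw [effY_add]
      by_cases hl : l ∈ K
      · obtain ⟨ha'l, hyl⟩ := hK l hl
        have hdl : 0 < effY ρ d l := hδ.trans_le <| by simpa [hd_def, hl] using le_effY hρ hd l
        rw [ha'l, hyl, zero_add, tullock_zero_left hγ, tullock_zero_right hγ hdl, if_pos hl]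
        simp
      · rw [if_neg hl, add_zero]
        exact mul_le_mul_of_nonneg_left (tullock_le_tullock_left hγ (effY_nonneg hρ ha' l)
          (le_add_of_nonneg_right (effY_nonneg hρ hd l)) (hy l)) (hv l)
    have hprizes := sum_le_sum fun l (_ : l ∈ univ) => hprize l
    rw [sum_add_distrib, sum_ite_mem, univ_inter] at hprizes
    have hcost : ∑ l, (a' + d) l = ∑ l, a' l + #K * δ := by
      simp only [Pi.add_apply, sum_add_distrib, hd_def, sum_ite_mem, univ_inter, sum_const,
        nsmul_eq_mul]
    unfold payoffAgainst
    rw [hcost, mul_add]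
    linarith
  have hlim : Tendsto (fun δ => payoffAgainst γ v c ρ y a' + ∑ k ∈ K, v k - c * (#K * δ))
      (𝓝[>] 0) (𝓝 (payoffAgainst γ v c ρ y a' + ∑ k ∈ K, v k)) :=
    tendsto_nhdsWithin_of_tendsto_nhds (Continuous.tendsto' (by fun_prop) _ _ (by simp))
  exact le_of_tendsto hlim (eventually_nhdsWithin_of_forall hbump)

lemma IsBestResponse.effY_pos_or_pos (hb : IsBestResponse γ v c ρ y a) (hγ : 0 < γ)
    (hv : ∀ k, 0 < v k) (hρ : ∀ k l, 0 ≤ ρ k l) (hy : ∀ k, 0 ≤ y k) (k : Fin m) :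
    0 < effY ρ a k ∨ 0 < y k := by
  by_contra! h
  have := hb.payoffAgainst_add_sum_le hγ (fun l => (hv l).le) hρ hy hb.1 (K := {k}) <| by
    simpa using ⟨h.1.antisymm (effY_nonneg hρ hb.1 k), h.2.antisymm (hy k)⟩
  linarith [sum_singleton v k, hv k]

/-- Otherwise the midpoint of `a` and `a'` would do strictly better, `tullock γ · (y k)` being
strictly concave. -/
lemma IsBestResponse.effY_eq (hb : IsBestResponse γ v c ρ y a)
    (hb' : IsBestResponse γ v c ρ y a') (hγ₀ : 0 < γ) (hγ₁ : γ ≤ 1) (hv : ∀ k, 0 < v k)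
    (hρ : ∀ k l, 0 ≤ ρ k l) (hy : ∀ k, 0 ≤ y k) {k : Fin m} (hk : 0 < y k) :
    effY ρ a' k = effY ρ a k := by
  by_contra hne
  set a₀ : Fin m → ℝ := (2⁻¹ : ℝ) • (a + a') with ha₀_def
  have ha₀ : ∀ l, 0 ≤ a₀ l := fun l => by
    simp only [ha₀_def, Pi.smul_apply, Pi.add_apply, smul_eq_mul]
    linarith [hb.1 l, hb'.1 l]
  have heff : ∀ l, effY ρ a₀ l = (effY ρ a l + effY ρ a' l) / 2 := fun l => by
    rw [effY_smul, effY_add, inv_mul_eq_div]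
  set gap : Fin m → ℝ := fun l => v l * (2 * tullock γ (effY ρ a₀ l) (y l)
    - tullock γ (effY ρ a l) (y l) - tullock γ (effY ρ a' l) (y l)) with hgap_def
  have hgap : ∀ l ∈ univ, 0 ≤ gap l := fun l _ => by
    refine mul_nonneg (hv l).le ?_
    rw [heff]
    linarith [tullock_add_tullock_le hγ₀ hγ₁ (effY_nonneg hρ hb.1 l) (effY_nonneg hρ hb'.1 l)
      (hy l)]
  have hgapk : 0 < gap k := by
    refine mul_pos (hv k) ?_
    rw [heff]
    linarith [tullock_add_tullock_lt hγ₀ hγ₁ (effY_nonneg hρ hb.1 k) (effY_nonneg hρ hb'.1 k)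
      (Ne.symm hne) hk]
  have hsum : ∑ l, gap l = 2 * payoffAgainst γ v c ρ y a₀ - payoffAgainst γ v c ρ y a
      - payoffAgainst γ v c ρ y a' := by
    have hcost : ∑ l, a₀ l = (∑ l, a l + ∑ l, a' l) / 2 := by
      simp only [ha₀_def, Pi.smul_apply, Pi.add_apply, smul_eq_mul, ← mul_sum, sum_add_distrib]
      ring
    simp only [payoffAgainst, hcost, hgap_def, mul_sub, sum_sub_distrib, mul_left_comm _ (2 : ℝ),
      ← mul_sum]
    ring
  linarith [sum_pos' hgap ⟨k, mem_univ k, hgapk⟩, hb.2 a₀ ha₀, hb'.2 a hb.1]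

end BestResponse

section Game

variable {m : ℕ} {γ : ℝ} {v : Fin m → ℝ} {c : Fin 2 → ℝ} {ρ : Fin 2 → Matrix (Fin m) (Fin m) ℝ}
  {e e' : Fin 2 → Fin m → ℝ}

lemma Fin.one_sub_ne_self (i : Fin 2) : 1 - i ≠ i := by
  fin_cases i <;> decide

lemma payoff_update_self (e : Fin 2 → Fin m → ℝ) (i : Fin 2) (a : Fin m → ℝ) :
    payoff γ v c ρ (Function.update e i a) i
      = payoffAgainst γ v (c i) (ρ i) (effY (ρ (1 - i)) (e (1 - i))) a := by
  rw [payoff, Function.update_self, Function.update_of_ne (Fin.one_sub_ne_self i), payoffAgainst]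

lemma payoff_eq_payoffAgainst (e : Fin 2 → Fin m → ℝ) (i : Fin 2) :
    payoff γ v c ρ e i = payoffAgainst γ v (c i) (ρ i) (effY (ρ (1 - i)) (e (1 - i))) (e i) :=
  rfl

lemma IsNashEq.isBestResponse (he : IsNashEq γ v c ρ e) (i : Fin 2) :
    IsBestResponse γ v (c i) (ρ i) (effY (ρ (1 - i)) (e (1 - i))) (e i) :=
  ⟨he.1 i, fun z hz => by
    rw [← payoff_update_self, ← payoff_eq_payoffAgainst]
    exact he.2 i z hz⟩

/-- The battlefields whose prize nobody wins under the `0 / 0 = 0` convention of `tullock`. -/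
noncomputable def unawarded (ρ : Fin 2 → Matrix (Fin m) (Fin m) ℝ) (f : Fin 2 → Fin m → ℝ) :
    Finset (Fin m) :=
  univ.filter fun k => ∀ i, effY (ρ i) (f i) k = 0

lemma payoff_zero_add_payoff_one (hγ : 0 < γ) (hρ : ∀ i k l, 0 ≤ ρ i k l)
    {f : Fin 2 → Fin m → ℝ} (hf : ∀ i k, 0 ≤ f i k) :
    payoff γ v c ρ f 0 + payoff γ v c ρ f 1
      = ∑ k, v k - ∑ k ∈ unawarded ρ f, v k - (c 0 * ∑ k, f 0 k + c 1 * ∑ k, f 1 k) := by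
  have hprize : ∀ k, v k * tullock γ (effY (ρ 0) (f 0) k) (effY (ρ 1) (f 1) k)
      + v k * tullock γ (effY (ρ 1) (f 1) k) (effY (ρ 0) (f 0) k)
      + (if k ∈ unawarded ρ f then v k else 0) = v k := by
    intro k
    by_cases hk : k ∈ unawarded ρ f
    · obtain ⟨hk₀, hk₁⟩ := Fin.forall_fin_two.1 (mem_filter.1 hk).2
      rw [if_pos hk, hk₀, hk₁, tullock_zero_left hγ]
      ring
    · have hk' : 0 < effY (ρ 0) (f 0) k ∨ 0 < effY (ρ 1) (f 1) k := by
        simp only [unawarded, mem_filter, mem_univ, true_and, Fin.forall_fin_two, not_and] at hk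
        by_contra! h
        exact hk (h.1.antisymm (effY_nonneg (hρ 0) (hf 0) k))
          (h.2.antisymm (effY_nonneg (hρ 1) (hf 1) k))
      rw [if_neg hk, add_zero, ← mul_add, tullock_add_tullock_swap (effY_nonneg (hρ 0) (hf 0) k)
        (effY_nonneg (hρ 1) (hf 1) k) hk', mul_one]
  have hsum := sum_congr rfl fun k (_ : k ∈ univ) => hprize k
  rw [sum_add_distrib, sum_add_distrib, sum_ite_mem, univ_inter] at hsum
  simp only [payoff, sub_zero, sub_self]
  linarith

lemma IsNashEq.payoff_update_add_sum_unawarded_le (he : IsNashEq γ v c ρ e) (hγ : 0 < γ)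
    (hv : ∀ k, 0 ≤ v k) (hρ : ∀ i k l, 0 ≤ ρ i k l) (i : Fin 2) {a : Fin m → ℝ}
    (ha : ∀ l, 0 ≤ a l) :
    payoff γ v c ρ (Function.update e i a) i + ∑ k ∈ unawarded ρ (Function.update e i a), v k
      ≤ payoff γ v c ρ e i := by
  rw [payoff_update_self]
  refine (he.isBestResponse i).payoffAgainst_add_sum_le hγ hv (hρ i)
    (effY_nonneg (hρ _) (he.1 _)) ha fun k hk => ?_
  have hk := (mem_filter.1 hk).2
  exact ⟨by simpa using hk i,
    by simpa [Function.update_of_ne (Fin.one_sub_ne_self i)] using hk (1 - i)⟩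

/-- Sum the four deviation inequalities between `e` and `e'`: by `payoff_zero_add_payoff_one`
all payoffs and costs cancel, so each of them is tight. -/
lemma IsNashEq.payoff_update_eq (he : IsNashEq γ v c ρ e) (he' : IsNashEq γ v c ρ e')
    (hγ : 0 < γ) (hv : ∀ k, 0 ≤ v k) (hρ : ∀ i k l, 0 ≤ ρ i k l) (i : Fin 2) :
    payoff γ v c ρ (Function.update e i (e' i)) i = payoff γ v c ρ e i := by
  have hf' : Function.update e' 1 (e 1) = Function.update e 0 (e' 0) := by
    ext j : 1; fin_cases j <;> simp
  have hg' : Function.update e' 0 (e 0) = Function.update e 1 (e' 1) := by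
    ext j : 1; fin_cases j <;> simp
  have hf_nonneg : ∀ j k, 0 ≤ Function.update e 0 (e' 0) j k := by
    intro j; fin_cases j <;> simp [he.1 1, he'.1 0]
  have hg_nonneg : ∀ j k, 0 ≤ Function.update e 1 (e' 1) j k := by
    intro j; fin_cases j <;> simp [he.1 0, he'.1 1]
  have h₁ := he.payoff_update_add_sum_unawarded_le hγ hv hρ 0 (he'.1 0)
  have h₂ := he.payoff_update_add_sum_unawarded_le hγ hv hρ 1 (he'.1 1)
  have h₃ := he'.payoff_update_add_sum_unawarded_le hγ hv hρ 0 (he.1 0)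
  have h₄ := he'.payoff_update_add_sum_unawarded_le hγ hv hρ 1 (he.1 1)
  rw [hg'] at h₃
  rw [hf'] at h₄
  have hsum_e := payoff_zero_add_payoff_one (v := v) (c := c) hγ hρ he.1
  have hsum_e' := payoff_zero_add_payoff_one (v := v) (c := c) hγ hρ he'.1
  have hsum_f := payoff_zero_add_payoff_one (v := v) (c := c) hγ hρ hf_nonneg
  have hsum_g := payoff_zero_add_payoff_one (v := v) (c := c) hγ hρ hg_nonneg
  simp only [Function.update_self, Function.update_of_ne zero_ne_one,
    Function.update_of_ne one_ne_zero] at hsum_f hsum_g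
  have := sum_nonneg fun k (_ : k ∈ unawarded ρ e) => hv k
  have := sum_nonneg fun k (_ : k ∈ unawarded ρ e') => hv k
  have := sum_nonneg fun k (_ : k ∈ unawarded ρ (Function.update e 0 (e' 0))) => hv k
  have := sum_nonneg fun k (_ : k ∈ unawarded ρ (Function.update e 1 (e' 1))) => hv k
  have htight : payoff γ v c ρ (Function.update e 0 (e' 0)) 0 = payoff γ v c ρ e 0 ∧
      payoff γ v c ρ (Function.update e 1 (e' 1)) 1 = payoff γ v c ρ e 1 :=
    ⟨by linarith, by linarith⟩
  fin_cases i
  exacts [htight.1, htight.2]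

lemma payoff_eq_sum_eqProb (e : Fin 2 → Fin m → ℝ) (i : Fin 2) :
    payoff γ v c ρ e i = ∑ k, v k * eqProb γ ρ e i k - c i * ∑ k, e i k :=
  rfl

lemma IsNashEq.isBestResponse_of_isNashEq (he : IsNashEq γ v c ρ e) (he' : IsNashEq γ v c ρ e')
    (hγ : 0 < γ) (hv : ∀ k, 0 ≤ v k) (hρ : ∀ i k l, 0 ≤ ρ i k l) (i : Fin 2) :
    IsBestResponse γ v (c i) (ρ i) (effY (ρ (1 - i)) (e (1 - i))) (e' i) :=
  ⟨he'.1 i, fun z hz => by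
    rw [← payoff_update_self, ← payoff_update_self, he.payoff_update_eq he' hγ hv hρ i]
    exact he.2 i z hz⟩

lemma IsNashEq.effY_eq_of_pos (he : IsNashEq γ v c ρ e) (he' : IsNashEq γ v c ρ e')
    (hγ₀ : 0 < γ) (hγ₁ : γ ≤ 1) (hv : ∀ k, 0 < v k) (hρ : ∀ i k l, 0 ≤ ρ i k l) (i : Fin 2)
    {k : Fin m} (hk : 0 < effY (ρ (1 - i)) (e (1 - i)) k) :
    effY (ρ i) (e' i) k = effY (ρ i) (e i) k :=
  (he.isBestResponse i).effY_eq (he.isBestResponse_of_isNashEq he' hγ₀ (fun l => (hv l).le) hρ i)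
    hγ₀ hγ₁ hv (hρ i) (effY_nonneg (hρ _) (he.1 _)) hk

lemma IsNashEq.tullock_exchange (he : IsNashEq γ v c ρ e) (he' : IsNashEq γ v c ρ e')
    (hγ₀ : 0 < γ) (hγ₁ : γ ≤ 1) (hv : ∀ k, 0 < v k) (hρ : ∀ i k l, 0 ≤ ρ i k l) (i : Fin 2)
    (k : Fin m) :
    tullock γ (effY (ρ i) (e' i) k) (effY (ρ (1 - i)) (e (1 - i)) k) = eqProb γ ρ e i k ∧
      eqProb γ ρ e' i k = eqProb γ ρ e i k := by
  have hy' : 0 < effY (ρ i) (e i) k →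
      effY (ρ (1 - i)) (e' (1 - i)) k = effY (ρ (1 - i)) (e (1 - i)) k := by
    simpa only [sub_sub_cancel] using he.effY_eq_of_pos he' hγ₀ hγ₁ hv hρ (1 - i) (k := k)
  have hy := effY_nonneg (hρ (1 - i)) (he.1 (1 - i))
  exact tullock_eq_of_exchange hγ₀ (effY_nonneg (hρ i) (he.1 i) k) (hy k)
    ((he.isBestResponse i).effY_pos_or_pos hγ₀ hv (hρ i) hy k)
    ((he.isBestResponse_of_isNashEq he' hγ₀ (fun l => (hv l).le) hρ i).effY_pos_or_pos hγ₀ hv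
      (hρ i) hy k)
    (he.effY_eq_of_pos he' hγ₀ hγ₁ hv hρ i) hy'

lemma IsNashEq.sum_eq (he : IsNashEq γ v c ρ e) (he' : IsNashEq γ v c ρ e')
    (hγ₀ : 0 < γ) (hγ₁ : γ ≤ 1) (hv : ∀ k, 0 < v k) (hc : ∀ i, 0 < c i)
    (hρ : ∀ i k l, 0 ≤ ρ i k l) (i : Fin 2) :
    ∑ k, e' i k = ∑ k, e i k := by
  have h := he.payoff_update_eq he' hγ₀ (fun k => (hv k).le) hρ i
  rw [payoff_update_self, payoff_eq_sum_eqProb, payoffAgainst] at h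
  simp only [(he.tullock_exchange he' hγ₀ hγ₁ hv hρ i _).1] at h
  exact mul_left_cancel₀ (hc i).ne' (by linarith)

end Game

theorem nash_equilibrium_outcomes_unique_general (m : ℕ) (γ : ℝ) (hγ0 : 0 < γ) (hγ1 : γ ≤ 1)
    (v : Fin m → ℝ) (hv : ∀ k, 0 < v k)
    (c : Fin 2 → ℝ) (hc : ∀ i, 0 < c i)
    (ρ : Fin 2 → Matrix (Fin m) (Fin m) ℝ)
    (hρ : ∀ i k l, 0 ≤ ρ i k l)
    (e e' : Fin 2 → Fin m → ℝ)
    (he : IsNashEq γ v c ρ e) (he' : IsNashEq γ v c ρ e') :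
    (∀ i k, eqProb γ ρ e i k = eqProb γ ρ e' i k) ∧
    (∀ i, ∑ k, e i k = ∑ k, e' i k) ∧
    (∀ i, payoff γ v c ρ e i = payoff γ v c ρ e' i) ∧
    (∀ k, (0 < effY (ρ 0) (e 0) k ∧ 0 < effY (ρ 1) (e 1) k) →
      (effY (ρ 0) (e' 0) k = effY (ρ 0) (e 0) k ∧
       effY (ρ 1) (e' 1) k = effY (ρ 1) (e 1) k)) := by
  have hprob : ∀ i k, eqProb γ ρ e' i k = eqProb γ ρ e i k :=
    fun i k => (he.tullock_exchange he' hγ0 hγ1 hv hρ i k).2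
  have hsum : ∀ i, ∑ k, e' i k = ∑ k, e i k := he.sum_eq he' hγ0 hγ1 hv hc hρ
  refine ⟨fun i k => (hprob i k).symm, fun i => (hsum i).symm, fun i => ?_,
    fun k hk => ⟨he.effY_eq_of_pos he' hγ0 hγ1 hv hρ 0 hk.2,
      he.effY_eq_of_pos he' hγ0 hγ1 hv hρ 1 hk.1⟩⟩
  simp only [payoff_eq_sum_eqProb, hprob, hsum]

/-- uniqueness of equilibrium outcomes. -/
theorem nash_equilibrium_outcomes_unique (m : ℕ) (γ : ℝ) (hγ0 : 0 < γ) (hγ1 : γ ≤ 1)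
    (v : Fin m → ℝ) (hv : ∀ k, 0 < v k)
    (c : Fin 2 → ℝ) (hc : ∀ i, 0 < c i)
    (ρ : Fin 2 → Matrix (Fin m) (Fin m) ℝ)
    (hρ : ∀ i k l, 0 ≤ ρ i k l) (hρd : ∀ i k, ρ i k k = 0)
    (e e' : Fin 2 → Fin m → ℝ)
    (he : IsNashEq γ v c ρ e) (he' : IsNashEq γ v c ρ e') :
    (∀ i k, eqProb γ ρ e i k = eqProb γ ρ e' i k) ∧
    (∀ i, ∑ k, e i k = ∑ k, e' i k) ∧
    (∀ i, payoff γ v c ρ e i = payoff γ v c ρ e' i) ∧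
    (∀ k, (0 < effY (ρ 0) (e 0) k ∧ 0 < effY (ρ 1) (e 1) k) →
      (effY (ρ 0) (e' 0) k = effY (ρ 0) (e 0) k ∧
       effY (ρ 1) (e' 1) k = effY (ρ 1) (e 1) k)) :=
  nash_equilibrium_outcomes_unique_general m γ hγ0 hγ1 v hv c hc ρ hρ e e' he he'
end

section
/- In the two-player interconnected contest with Tullock contest success function with parameter γ ∈ (0,1], assume the matrices I + ρ_i are nonsingular for i ∈ {1,2} and set μ_i = (I + ρ_i)^{-1} 𝟙, where 𝟙 is the all-ones vector. If (e_1, e_2) is an interior Nash equilibrium (e_i^k > 0 for all i and k), then μ_i^k > 0 for all i and k, the winning probabilities satisfy p_i^k = (μ_{-i}^k c_{-i})^γ / ((μ_1^k c_1)^γ + (μ_2^k c_2)^γ) for all i ∈ {1,2} and k ∈ B, and the efforts satisfy e_i = (γ/c_i) (I + ρ_iᵀ)^{-1} w_i, where w_i ∈ ℝ^B is the vector with components w_i^k = p_1^k p_2^k v^k / μ_i^k. -/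
open Finset Matrix

/-- Katz–Bonacich-type weights: `μ = (I + ρ)⁻¹ 𝟙`. -/
noncomputable def muVec {m : ℕ} (ρ : Matrix (Fin m) (Fin m) ℝ) : Fin m → ℝ :=
  (1 + ρ)⁻¹.mulVec (fun _ => 1)

/-! At an interior equilibrium each player's first-order conditions read `(I + ρ_i) g_i = c_i 𝟙`,
where `g_i^k = γ v^k p_1^k p_2^k / y_i^k` is the marginal value of effective effort at `k`.
Inverting gives `g_i = c_i μ_i`, so `μ_i > 0` and `y_i^k = γ v^k p_1^k p_2^k / (μ_i^k c_i)`.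
The two effective efforts at `k` are thus `K / (μ_1^k c_1)` and `K / (μ_2^k c_2)` for a common `K`,
which gives the winning probabilities, and inverting `y_i = (I + ρ_iᵀ) e_i` gives the efforts. -/

lemma Matrix.nonsing_inv_mulVec_mulVec {n α : Type*} [Fintype n] [DecidableEq n] [CommRing α]
    {A : Matrix n n α} (hA : IsUnit A.det) (x : n → α) : A⁻¹ *ᵥ (A *ᵥ x) = x := by
  rw [mulVec_mulVec, nonsing_inv_mul _ hA, one_mulVec]

lemma hasDerivAt_tullock_left {γ a b : ℝ} (ha : 0 < a) (hb : 0 ≤ b) :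
    HasDerivAt (fun y => tullock γ y b) (γ * tullock γ a b * tullock γ b a / a) a := by
  have hsum : a ^ γ + b ^ γ ≠ 0 := by
    have := Real.rpow_pos_of_pos ha γ; have := Real.rpow_nonneg hb γ; positivity
  have hpow : HasDerivAt (fun y : ℝ => y ^ γ) (γ * a ^ (γ - 1)) a :=
    Real.hasDerivAt_rpow_const (Or.inl ha.ne')
  refine (hpow.div (hpow.add_const (b ^ γ)) hsum).congr_deriv ?_
  rw [Real.rpow_sub_one ha.ne']
  unfold tullock
  rw [add_comm (b ^ γ)]
  field_simp
  ring

lemma tullock_pos {γ a b : ℝ} (ha : 0 < a) (hb : 0 ≤ b) : 0 < tullock γ a b := by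
  have := Real.rpow_pos_of_pos ha γ; have := Real.rpow_nonneg hb γ
  unfold tullock
  positivity

lemma tullock_div_div {γ K a b : ℝ} (hK : 0 < K) (ha : 0 < a) (hb : 0 < b) :
    tullock γ (K / a) (K / b) = b ^ γ / (a ^ γ + b ^ γ) := by
  have hKγ := Real.rpow_pos_of_pos hK γ
  have haγ := Real.rpow_pos_of_pos ha γ
  have hbγ := Real.rpow_pos_of_pos hb γ
  rw [tullock, Real.div_rpow hK.le ha.le, Real.div_rpow hK.le hb.le]
  field_simp
  ring

lemma effY_eq_mulVec {m : ℕ} {ρ : Matrix (Fin m) (Fin m) ℝ} (hρ : ∀ k, ρ k k = 0)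
    (e : Fin m → ℝ) : effY ρ e = (1 + ρᵀ) *ᵥ e := by
  ext k
  rw [← transpose_one, ← transpose_add, mulVec_transpose, vecMul, dotProduct,
    ← Finset.add_sum_erase _ _ (Finset.mem_univ k), effY]
  congr 1
  · simp [hρ]
  · refine Finset.sum_congr rfl fun l hl => ?_
    simp [Finset.ne_of_mem_erase hl, mul_comm]

lemma effY_update {m : ℕ} {ρ : Matrix (Fin m) (Fin m) ℝ} (hρ : ∀ k, ρ k k = 0)
    (e : Fin m → ℝ) (l : Fin m) (t : ℝ) :
    effY ρ (Function.update e l t) = effY ρ e + (t - e l) • (1 + ρ) l := by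
  have hupdate : Function.update e l t = e + Pi.single l (t - e l) := by
    ext k; rcases eq_or_ne k l with rfl | h <;> simp [*]
  rw [effY_eq_mulVec hρ, effY_eq_mulVec hρ, hupdate, mulVec_add, mulVec_single]
  ext k
  simp [one_apply, eq_comm, mul_add, mul_comm]

lemma effY_pos {m : ℕ} {ρ : Matrix (Fin m) (Fin m) ℝ} (hρ : ∀ k l, 0 ≤ ρ k l)
    {e : Fin m → ℝ} (he : ∀ k, 0 ≤ e k) {k : Fin m} (hk : 0 < e k) : 0 < effY ρ e k :=
  add_pos_of_pos_of_nonneg hk (Finset.sum_nonneg fun l _ => mul_nonneg (hρ l k) (he l))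

lemma eq_smul_inv_mulVec_of_effY_eq_smul {m : ℕ} {ρ : Matrix (Fin m) (Fin m) ℝ}
    (hρ : ∀ k, ρ k k = 0) (hdet : IsUnit (1 + ρ).det) {e w : Fin m → ℝ} {a : ℝ}
    (h : effY ρ e = a • w) : e = a • ((1 + ρᵀ)⁻¹ *ᵥ w) := by
  have hdetT : IsUnit (1 + ρᵀ).det := by
    rwa [← transpose_one, ← transpose_add, det_transpose]
  rw [← mulVec_smul, ← h, effY_eq_mulVec hρ, nonsing_inv_mulVec_mulVec hdetT]

lemma eqProb_one_sub {m : ℕ} (γ : ℝ) (ρ : Fin 2 → Matrix (Fin m) (Fin m) ℝ)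
    (e : Fin 2 → Fin m → ℝ) (i : Fin 2) (k : Fin m) :
    eqProb γ ρ e (1 - i) k = tullock γ (effY (ρ (1 - i)) (e (1 - i)) k) (effY (ρ i) (e i) k) := by
  rw [eqProb, sub_sub_cancel]

lemma eqProb_mul_eqProb_one_sub {m : ℕ} (γ : ℝ) (ρ : Fin 2 → Matrix (Fin m) (Fin m) ℝ)
    (e : Fin 2 → Fin m → ℝ) (i : Fin 2) (k : Fin m) :
    eqProb γ ρ e i k * eqProb γ ρ e (1 - i) k = eqProb γ ρ e 0 k * eqProb γ ρ e 1 k := by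
  fin_cases i
  · rfl
  · exact mul_comm _ _

/-- `∂(v^k p_i^k) / ∂y_i^k`, by `∂p / ∂y = γ p (1 - p) / y`. -/
noncomputable def marginalGain {m : ℕ} (γ : ℝ) (v : Fin m → ℝ)
    (ρ : Fin 2 → Matrix (Fin m) (Fin m) ℝ) (e : Fin 2 → Fin m → ℝ) (i : Fin 2) (k : Fin m) : ℝ :=
  γ * (eqProb γ ρ e 0 k * eqProb γ ρ e 1 k * v k) / effY (ρ i) (e i) k

section Equilibrium

variable {m : ℕ} {γ : ℝ} {v : Fin m → ℝ} {c : Fin 2 → ℝ}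
  {ρ : Fin 2 → Matrix (Fin m) (Fin m) ℝ} {e : Fin 2 → Fin m → ℝ}

lemma eqProb_eq_of_effY_eq_div {K : ℝ} {a : Fin 2 → ℝ} {k : Fin m} (hK : 0 < K)
    (ha : ∀ i, 0 < a i) (hy : ∀ i, effY (ρ i) (e i) k = K / a i) (i : Fin 2) :
    eqProb γ ρ e i k = a (1 - i) ^ γ / (a 0 ^ γ + a 1 ^ γ) := by
  rw [eqProb, hy, hy, tullock_div_div hK (ha i) (ha (1 - i))]
  fin_cases i
  · rfl
  · exact congrArg _ (add_comm _ _)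

lemma IsNashEq.effY_pos (he : IsNashEq γ v c ρ e) (hρ : ∀ i k l, 0 ≤ ρ i k l)
    (hint : ∀ i k, 0 < e i k) (i : Fin 2) (k : Fin m) : 0 < effY (ρ i) (e i) k :=
  _root_.effY_pos (hρ i) (he.1 i) (hint i k)

lemma IsNashEq.eqProb_pos (he : IsNashEq γ v c ρ e) (hρ : ∀ i k l, 0 ≤ ρ i k l)
    (hint : ∀ i k, 0 < e i k) (i : Fin 2) (k : Fin m) : 0 < eqProb γ ρ e i k :=
  tullock_pos (he.effY_pos hρ hint i k) (he.effY_pos hρ hint _ k).le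

lemma hasDerivAt_payoff_update {i : Fin 2} (hρ : ∀ k, ρ i k k = 0)
    (hy : ∀ k, 0 < effY (ρ i) (e i) k) (hy' : ∀ k, 0 ≤ effY (ρ (1 - i)) (e (1 - i)) k)
    (l : Fin m) :
    HasDerivAt (fun t => payoff γ v c ρ (Function.update e i (Function.update (e i) l t)) i)
      (((1 + ρ i) *ᵥ marginalGain γ v ρ e i) l - c i) (e i l) := by
  have hi : 1 - i ≠ i := by fin_cases i <;> decide
  have hpayoff : (fun t => payoff γ v c ρ (Function.update e i (Function.update (e i) l t)) i) =
      fun t => (∑ k, v k * tullock γ (effY (ρ i) (e i) k + (t - e i l) * (1 + ρ i) l k)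
          (effY (ρ (1 - i)) (e (1 - i)) k)) - c i * (t + ∑ k ∈ univ \ {l}, e i k) := by
    funext t
    simp only [payoff, Function.update_self, Function.update_of_ne hi, effY_update hρ,
      Finset.sum_update_of_mem (mem_univ l)]
    rfl
  have hline (k : Fin m) : HasDerivAt (fun t => effY (ρ i) (e i) k + (t - e i l) * (1 + ρ i) l k)
      ((1 + ρ i) l k) (e i l) := by
    simpa using (((hasDerivAt_id _).sub_const (e i l)).mul_const ((1 + ρ i) l k)).const_add
      (effY (ρ i) (e i) k)
  rw [hpayoff]
  refine (HasDerivAt.sub (HasDerivAt.fun_sum fun k _ => HasDerivAt.const_mul (v k)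
    ((hasDerivAt_tullock_left (hy k) (hy' k)).comp_of_eq (e i l) (hline k) (by simp)))
    (((hasDerivAt_id _).add_const _).const_mul _)).congr_deriv ?_
  rw [mul_one]
  congr 1
  refine Finset.sum_congr rfl fun k _ => ?_
  rw [← eqProb_one_sub]
  change v k * (γ * eqProb γ ρ e i k * eqProb γ ρ e (1 - i) k / _ * _) = _
  rw [marginalGain, ← eqProb_mul_eqProb_one_sub γ ρ e i k]
  ring

lemma IsNashEq.isLocalMax_update (he : IsNashEq γ v c ρ e) {i : Fin 2} {l : Fin m}
    (hl : 0 < e i l) :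
    IsLocalMax (fun t => payoff γ v c ρ (Function.update e i (Function.update (e i) l t)) i)
      (e i l) := by
  filter_upwards [eventually_gt_nhds hl] with t ht
  simp only [Function.update_eq_self]
  refine he.2 i _ fun k => ?_
  rcases eq_or_ne k l with rfl | hk
  · simpa using ht.le
  · simpa [hk] using he.1 i k

lemma IsNashEq.mulVec_marginalGain (he : IsNashEq γ v c ρ e) (hρ : ∀ i k l, 0 ≤ ρ i k l)
    (hρd : ∀ i k, ρ i k k = 0) (hint : ∀ i k, 0 < e i k) (i : Fin 2) :
    (1 + ρ i) *ᵥ marginalGain γ v ρ e i = fun _ => c i := by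
  funext l
  exact sub_eq_zero.mp <| (he.isLocalMax_update (hint i l)).hasDerivAt_eq_zero <|
    hasDerivAt_payoff_update (hρd i) (he.effY_pos hρ hint i)
      (fun k => (he.effY_pos hρ hint _ k).le) l

lemma IsNashEq.marginalGain_eq (he : IsNashEq γ v c ρ e) (hρ : ∀ i k l, 0 ≤ ρ i k l)
    (hρd : ∀ i k, ρ i k k = 0) (hdet : ∀ i, IsUnit (1 + ρ i).det) (hint : ∀ i k, 0 < e i k)
    (i : Fin 2) : marginalGain γ v ρ e i = c i • muVec (ρ i) := by
  have hconst : (fun _ => c i) = c i • fun _ : Fin m => (1 : ℝ) := by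
    funext; simp
  rw [muVec, ← mulVec_smul, ← hconst, ← he.mulVec_marginalGain hρ hρd hint i,
    nonsing_inv_mulVec_mulVec (hdet i)]

lemma IsNashEq.effY_eq (he : IsNashEq γ v c ρ e) (hρ : ∀ i k l, 0 ≤ ρ i k l)
    (hρd : ∀ i k, ρ i k k = 0) (hdet : ∀ i, IsUnit (1 + ρ i).det) (hint : ∀ i k, 0 < e i k)
    (i : Fin 2) (k : Fin m) (hK : γ * (eqProb γ ρ e 0 k * eqProb γ ρ e 1 k * v k) ≠ 0) :
    effY (ρ i) (e i) k
      = γ * (eqProb γ ρ e 0 k * eqProb γ ρ e 1 k * v k) / (muVec (ρ i) k * c i) := by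
  have hgain := congrFun (he.marginalGain_eq hρ hρd hdet hint i) k
  rw [Pi.smul_apply, smul_eq_mul, marginalGain] at hgain
  rw [mul_comm (muVec (ρ i) k), ← hgain, div_div_cancel₀ hK]

lemma IsNashEq.muVec_pos (he : IsNashEq γ v c ρ e) (hc : ∀ i, 0 < c i)
    (hρ : ∀ i k l, 0 ≤ ρ i k l) (hρd : ∀ i k, ρ i k k = 0) (hdet : ∀ i, IsUnit (1 + ρ i).det)
    (hint : ∀ i k, 0 < e i k) (i : Fin 2) (k : Fin m)
    (hK : 0 < γ * (eqProb γ ρ e 0 k * eqProb γ ρ e 1 k * v k)) : 0 < muVec (ρ i) k := by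
  have hy := he.effY_pos hρ hint i k
  rw [he.effY_eq hρ hρd hdet hint i k hK.ne', div_pos_iff_of_pos_left hK] at hy
  exact pos_of_mul_pos_left hy (hc i).le

end Equilibrium

theorem interior_equilibrium_characterization_general (m : ℕ) (γ : ℝ) (hγ0 : 0 < γ)
    (v : Fin m → ℝ) (hv : ∀ k, 0 < v k)
    (c : Fin 2 → ℝ) (hc : ∀ i, 0 < c i)
    (ρ : Fin 2 → Matrix (Fin m) (Fin m) ℝ)
    (hρ : ∀ i k l, 0 ≤ ρ i k l) (hρd : ∀ i k, ρ i k k = 0)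
    (hdet : ∀ i, IsUnit (1 + ρ i).det)
    (e : Fin 2 → Fin m → ℝ) (he : IsNashEq γ v c ρ e)
    (hint : ∀ i k, 0 < e i k) :
    (∀ (i : Fin 2) (k : Fin m), 0 < muVec (ρ i) k) ∧
    (∀ (i : Fin 2) (k : Fin m),
      eqProb γ ρ e i k =
        (muVec (ρ (1 - i)) k * c (1 - i)) ^ γ /
          ((muVec (ρ 0) k * c 0) ^ γ + (muVec (ρ 1) k * c 1) ^ γ)) ∧
    (∀ (i : Fin 2) (k : Fin m),
      e i k = (γ / c i) *
        ((1 + (ρ i)ᵀ)⁻¹.mulVec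
          (fun l => eqProb γ ρ e 0 l * eqProb γ ρ e 1 l * v l / muVec (ρ i) l)) k) := by
  have hK (k : Fin m) : 0 < γ * (eqProb γ ρ e 0 k * eqProb γ ρ e 1 k * v k) := by
    have := he.eqProb_pos hρ hint 0 k; have := he.eqProb_pos hρ hint 1 k; have := hv k
    positivity
  have hmu i k := he.muVec_pos hc hρ hρd hdet hint i k (hK k)
  have hy i k := he.effY_eq hρ hρd hdet hint i k (hK k).ne'
  refine ⟨hmu, fun i k => ?_, fun i k => ?_⟩
  · exact eqProb_eq_of_effY_eq_div (hK k) (fun j => mul_pos (hmu j k) (hc j)) (hy · k) i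
  · refine congrFun (eq_smul_inv_mulVec_of_effY_eq_smul (hρd i) (hdet i) (funext fun l => ?_)) k
    rw [hy, Pi.smul_apply, smul_eq_mul]
    field_simp

/-- characterization of interior equilibrium. -/
theorem interior_equilibrium_characterization (m : ℕ) (γ : ℝ) (hγ0 : 0 < γ) (hγ1 : γ ≤ 1)
    (v : Fin m → ℝ) (hv : ∀ k, 0 < v k)
    (c : Fin 2 → ℝ) (hc : ∀ i, 0 < c i)
    (ρ : Fin 2 → Matrix (Fin m) (Fin m) ℝ)
    (hρ : ∀ i k l, 0 ≤ ρ i k l) (hρd : ∀ i k, ρ i k k = 0)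
    (hdet : ∀ i, IsUnit (1 + ρ i).det)
    (e : Fin 2 → Fin m → ℝ) (he : IsNashEq γ v c ρ e)
    (hint : ∀ i k, 0 < e i k) :
    (∀ (i : Fin 2) (k : Fin m), 0 < muVec (ρ i) k) ∧
    (∀ (i : Fin 2) (k : Fin m),
      eqProb γ ρ e i k =
        (muVec (ρ (1 - i)) k * c (1 - i)) ^ γ /
          ((muVec (ρ 0) k * c 0) ^ γ + (muVec (ρ 1) k * c 1) ^ γ)) ∧
    (∀ (i : Fin 2) (k : Fin m),
      e i k = (γ / c i) *
        ((1 + (ρ i)ᵀ)⁻¹.mulVec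
          (fun l => eqProb γ ρ e 0 l * eqProb γ ρ e 1 l * v l / muVec (ρ i) l)) k) :=
  interior_equilibrium_characterization_general m γ hγ0 v hv c hc ρ hρ hρd hdet e he hint
end
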